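/- arXiv:1305.3940 — 3 statements merged into one kernel-verified Lean document; each statement's English description precedes it below -/
import Mathlib

section
/- There exist permutations σ₁, σ₂, σ₃, σ₄ in the symmetric group S₈ on 8 letters such that: σ₁, σ₂, σ₃ each have cycle type {2,2,2} (a product of three disjoint transpositions), σ₄ has cycle type {4,2,2} (a 4-cycle times two disjoint transpositions), σ₁σ₂σ₃σ₄ = 1, and σ₁, σ₂, σ₃, σ₄ generate the full symmetric group S₈. -/
/-!
The tuple is explicit: the cycle types are read off disjoint cycle decompositions and the
product relation is a finite computation. The generated subgroup contains the 8-cycle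
`c = σ₁ σ₃ σ₂ σ₄ σ₂` and the transposition `(σ₂ σ₄ σ₃)⁵ = (2 c(2))`, and an `n`-cycle together
with a transposition of two consecutive points of it generates `Sₙ`.
-/

open Equiv Equiv.Perm

namespace List

variable {α : Type*} [DecidableEq α]

theorem disjoint_formPerm_of_disjoint {l l' : List α} (h : l.Disjoint l') :
    (formPerm l).Disjoint (formPerm l') := by
  intro x
  by_cases hx : x ∈ l
  · exact Or.inr (formPerm_apply_of_notMem fun hx' => h hx hx')
  · exact Or.inl (formPerm_apply_of_notMem hx)

theorem card_support_formPerm [Fintype α] {l : List α} (hl : l.Nodup) (hn : 2 ≤ l.length) :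
    (formPerm l).support.card = l.length := by
  rw [support_formPerm_of_nodup l hl (fun x h => by simp [h] at hn), card_toFinset,
    dedup_eq_self.mpr hl]

end List

namespace Equiv.Perm

variable {α : Type*} [DecidableEq α]

def ofCycles (L : List (List α)) : Perm α := (L.map List.formPerm).prod

theorem cycleType_ofCycles [Fintype α] {L : List (List α)} (hL : L.flatten.Nodup)
    (hlen : ∀ l ∈ L, 2 ≤ l.length) :
    (ofCycles L).cycleType = L.map List.length := by
  obtain ⟨hnodup, hdisj⟩ := List.nodup_flatten.mp hL
  rw [ofCycles, cycleType_eq _ rfl, List.map_map]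
  · congr 1
    exact List.map_congr_left fun l hl => List.card_support_formPerm (hnodup l hl) (hlen l hl)
  · simp only [List.mem_map]
    rintro _ ⟨l, hl, rfl⟩
    exact List.isCycle_formPerm (hnodup l hl) (hlen l hl)
  · exact List.pairwise_map.mpr (hdisj.imp List.disjoint_formPerm_of_disjoint)

theorem closure_eq_top_of_isCycle_of_swap_mem [Fintype α] {S : Set (Perm α)} {c : Perm α}
    (hc : c.IsCycle) (hsupp : c.support = Finset.univ) (x : α) (hc_mem : c ∈ Subgroup.closure S)
    (hswap : swap x (c x) ∈ Subgroup.closure S) : Subgroup.closure S = ⊤ := by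
  rw [eq_top_iff, ← closure_cycle_adjacent_swap hc hsupp x, Subgroup.closure_le]
  exact Set.insert_subset hc_mem (Set.singleton_subset_iff.mpr hswap)

end Equiv.Perm

namespace BranchCycles

def σ₁ : Perm (Fin 8) := ofCycles [[0, 2], [1, 4], [5, 7]]
def σ₂ : Perm (Fin 8) := ofCycles [[2, 5], [3, 4], [6, 7]]
def σ₃ : Perm (Fin 8) := ofCycles [[0, 6], [4, 7], [2, 3]]
def σ₄ : Perm (Fin 8) := ofCycles [[1, 2, 6, 4], [0, 5], [3, 7]]

theorem prod_eq_one : σ₁ * σ₂ * σ₃ * σ₄ = 1 := by decide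

set_option maxRecDepth 8000 in
theorem closure_eq_top : Subgroup.closure ({σ₁, σ₂, σ₃, σ₄} : Set (Perm (Fin 8))) = ⊤ := by
  set c : Perm (Fin 8) := List.formPerm [0, 3, 4, 2, 6, 5, 1, 7]
  have hc : c.IsCycle := List.isCycle_formPerm (by decide) (by decide)
  have hc_supp : c.support = Finset.univ := by
    rw [List.support_formPerm_of_nodup _ (by decide) (by simp)]
    decide
  have hc_word : [σ₁, σ₃, σ₂, σ₄, σ₂].prod = c := by decide
  -- `σ₂ σ₄ σ₃` has cycle type (5)(2)
  have hswap_word : [σ₂, σ₄, σ₃].prod ^ 5 = swap 2 (c 2) := by decide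
  refine closure_eq_top_of_isCycle_of_swap_mem hc hc_supp 2 ?_ ?_
  · rw [← hc_word]
    exact list_prod_mem fun _ hg => Subgroup.subset_closure (by aesop)
  · rw [← hswap_word]
    exact pow_mem (list_prod_mem fun _ hg => Subgroup.subset_closure (by aesop)) 5

end BranchCycles

/-- There is a branch-cycle tuple in `S₈` of cycle types `(2³, 2³, 2³, (4)(2)²)`
with product one generating the full `S₈`. -/
theorem stmt_6 : ∃ σ₁ σ₂ σ₃ σ₄ : Equiv.Perm (Fin 8),
    σ₁.cycleType = {2, 2, 2} ∧ σ₂.cycleType = {2, 2, 2} ∧ σ₃.cycleType = {2, 2, 2} ∧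
    σ₄.cycleType = {4, 2, 2} ∧
    σ₁ * σ₂ * σ₃ * σ₄ = 1 ∧
    Subgroup.closure ({σ₁, σ₂, σ₃, σ₄} : Set (Equiv.Perm (Fin 8))) = ⊤ := by
  open BranchCycles in
  refine ⟨σ₁, σ₂, σ₃, σ₄, ?_, ?_, ?_, ?_, prod_eq_one, closure_eq_top⟩ <;>
    exact (cycleType_ofCycles (by decide) (by decide)).trans rfl
end

section
/- For every even integer n ≥ 4, there exist permutations σ₁, σ₂, σ₃, σ₄ in the symmetric group Sₙ on n letters such that: σ₁ and σ₄ each have cycle type consisting of n/2 copies of 2 (fixed-point-free involutions), σ₂ and σ₃ each have cycle type consisting of (n-2)/2 copies of 2, σ₁σ₂σ₃σ₄ = 1, and the subgroup of Sₙ generated by σ₁, σ₂, σ₃, σ₄ is transitive on the n letters. -/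
/-!
Realise `Fin n` as the vertices of a regular `n`-gon, i.e. as `ℤ/n`, and take the two reflections
`x ↦ 1 - x` and `x ↦ -x`. Since `n` is even, `x + x = 1` has no solution and `x + x = 0` has
exactly the two solutions `0` and `n/2`, so the first reflection is a fixed-point-free involution
and the second one fixes exactly two points. The tuple `(x ↦ 1 - x, x ↦ -x, x ↦ -x, x ↦ 1 - x)`
has product one, and the product of the first two entries is the rotation `x ↦ x + 1`, whose
powers already act transitively.
-/

open Finset Equiv.Perm

namespace Equiv.Perm

variable {α : Type*} [Fintype α] [DecidableEq α]

theorem cycleType_eq_replicate_of_sq_eq_one {σ : Perm α} (hσ : σ ^ 2 = 1) :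
    σ.cycleType = Multiset.replicate (#σ.support / 2) 2 := by
  have hσ' := cycleType_of_pow_prime_eq_one hσ
  rw [hσ', ← sum_cycleType, hσ']
  simp

end Equiv.Perm

namespace Equiv

variable {α : Type*} [AddCommGroup α]

theorem subLeft_mul_subLeft (a b : α) :
    Equiv.subLeft a * Equiv.subLeft b = Equiv.addRight (a - b) := by
  ext x
  simp only [Perm.coe_mul, Function.comp_apply, subLeft_apply, coe_addRight]
  abel

theorem subLeft_sq (a : α) : Equiv.subLeft a ^ 2 = 1 := by
  rw [sq, subLeft_mul_subLeft, sub_self, addRight_zero]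

theorem card_support_subLeft [Fintype α] [DecidableEq α] (c : α) :
    #(Perm.support (Equiv.subLeft c)) = Fintype.card α - #{x | x + x = c} := by
  have hsupp : Perm.support (Equiv.subLeft c) = ({x | x + x = c} : Finset α)ᶜ := by
    ext x
    simp [sub_eq_iff_eq_add, eq_comm (a := c)]
  rw [hsupp, card_compl]

end Equiv

namespace Fin

open Fin.CommRing

variable {n : ℕ} [NeZero n]

theorem add_self_ne_one (hn : Even n) (x : Fin n) : x + x ≠ 1 := fun hx =>
  (not_even_iff_odd_of_even hn).mpr odd_one (hx ▸ (⟨x, rfl⟩ : Even (x + x)))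

theorem add_self_eq_zero_iff {m : ℕ} (hm : n = m + m) (x : Fin n) :
    x + x = 0 ↔ x = 0 ∨ x.val = m := by
  have := x.isLt
  rw [Fin.ext_iff, Fin.ext_iff, val_add_eq_ite, val_zero]
  split_ifs <;> omega

theorem card_filter_add_self_eq_zero {m : ℕ} (hm : n = m + m) :
    #{x : Fin n | x + x = 0} = 2 := by
  have hmn : m < n := by have := NeZero.ne n; omega
  have hsol : ({x | x + x = 0} : Finset (Fin n)) = {0, ⟨m, hmn⟩} := by
    ext x
    rw [mem_filter, add_self_eq_zero_iff hm, mem_insert, mem_singleton,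
      Fin.ext_iff (b := ⟨m, hmn⟩)]
    simp
  rw [hsol, card_pair]
  simp only [ne_eq, Fin.ext_iff, val_zero]
  omega

theorem exists_addRight_one_pow_apply_eq (a b : Fin n) :
    ∃ k : ℕ, (Equiv.addRight (1 : Fin n) ^ k) a = b :=
  ⟨(b - a).val, by
    rw [Equiv.nsmul_addRight, Equiv.coe_addRight, nsmul_one, cast_val_eq_self]
    exact add_sub_cancel a b⟩

end Fin

/-- Type I degeneration 1 for even `n ≥ 4`:
cycle types `(2^(n/2), 2^((n-2)/2), 2^((n-2)/2), 2^(n/2))`,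
product one, generating a transitive subgroup of `Sₙ`. -/
theorem stmt_11 (n : ℕ) (hn : Even n) (hn4 : 4 ≤ n) :
    ∃ σ₁ σ₂ σ₃ σ₄ : Equiv.Perm (Fin n),
      σ₁.cycleType = Multiset.replicate (n / 2) 2 ∧
      σ₂.cycleType = Multiset.replicate ((n - 2) / 2) 2 ∧
      σ₃.cycleType = Multiset.replicate ((n - 2) / 2) 2 ∧
      σ₄.cycleType = Multiset.replicate (n / 2) 2 ∧
      σ₁ * σ₂ * σ₃ * σ₄ = 1 ∧
      ∀ a b : Fin n,
        ∃ g ∈ Subgroup.closure ({σ₁, σ₂, σ₃, σ₄} : Set (Equiv.Perm (Fin n))), g a = b := by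
  have : NeZero n := ⟨by omega⟩
  have hfree : cycleType (Equiv.subLeft (1 : Fin n)) = Multiset.replicate (n / 2) 2 := by
    rw [cycleType_eq_replicate_of_sq_eq_one (Equiv.subLeft_sq 1), Equiv.card_support_subLeft,
      filter_false_of_mem fun x _ => Fin.add_self_ne_one hn x, card_empty,
      Fintype.card_fin, Nat.sub_zero]
  obtain ⟨m, hm⟩ := hn
  have hneg : cycleType (Equiv.subLeft (0 : Fin n)) = Multiset.replicate ((n - 2) / 2) 2 := by
    rw [cycleType_eq_replicate_of_sq_eq_one (Equiv.subLeft_sq 0), Equiv.card_support_subLeft,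
      Fin.card_filter_add_self_eq_zero hm, Fintype.card_fin]
  refine ⟨_, _, _, _, hfree, hneg, hneg, hfree, ?_, fun a b => ?_⟩
  · rw [mul_assoc (Equiv.subLeft 1), ← sq, Equiv.subLeft_sq, mul_one, ← sq, Equiv.subLeft_sq]
  · obtain ⟨k, hk⟩ := Fin.exists_addRight_one_pow_apply_eq a b
    refine ⟨_, pow_mem ?_ k, hk⟩
    rw [← sub_zero (1 : Fin n), ← Equiv.subLeft_mul_subLeft]
    exact mul_mem (Subgroup.subset_closure (by simp)) (Subgroup.subset_closure (by simp))
end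

section
/- For every even integer n ≥ 6, there exist permutations σ₁, σ₂, σ₃, σ₄ in the symmetric group Sₙ on n letters such that: σ₁ has cycle type consisting of one 3 together with (n-4)/2 copies of 2 (a 3-cycle times (n-4)/2 disjoint transpositions), σ₂ and σ₃ each have cycle type consisting of (n-2)/2 copies of 2, σ₄ has cycle type consisting of n/2 copies of 2 (a fixed-point-free involution), σ₁σ₂σ₃σ₄ = 1, and the subgroup of Sₙ generated by σ₁, σ₂, σ₃, σ₄ is transitive on the n letters. -/
/-!
Identify the letters with `ℤ/n` and write `r c` for the reflection `x ↦ c - x`. Then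
`σ₂ = r 0`, `σ₄ = r 1`, `σ₃` is `r (-1)` with its `2`-cycle `(0 -1)` removed, and `σ₁` is `r 2`
with its fixed point `1` spliced into its `2`-cycle `(0 2)`, giving the `3`-cycle `(0 1 2)`.
Since `n` is even, `r c` is conjugate to `r (c + 2)`, has no fixed point for `c = 1` and exactly
two (`0` and `n/2`) for `c = 0`; this gives the cycle types. The product relation reduces to
`r a * r b = (x ↦ x + (a - b))`, and `σ₄ σ₂ = (x ↦ x + 1)` makes the group transitive.
-/

open Equiv Equiv.Perm Finset

theorem Multiset.replicate_sub_singleton {α : Type*} [DecidableEq α] (k : ℕ) (a : α) :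
    replicate k a - {a} = replicate (k - 1) a := by
  cases k with
  | zero => simp
  | succ k => rw [replicate_succ, sub_singleton, erase_cons_head, Nat.add_sub_cancel]

theorem Equiv.addRight_pow {G : Type*} [AddGroup G] (a : G) (k : ℕ) :
    Equiv.addRight a ^ k = Equiv.addRight (k • a) := by
  induction k with
  | zero => ext; simp
  | succ k ih => ext x; simp [pow_succ', ih, succ_nsmul, add_assoc]

namespace Equiv.Perm

variable {α : Type*} [Fintype α] [DecidableEq α]

theorem cycleType_eq_replicate_of_mul_self {σ : Perm α} (h : σ * σ = 1) :
    σ.cycleType = Multiset.replicate (#σ.support / 2) 2 := by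
  have : Fact (Nat.Prime 2) := ⟨Nat.prime_two⟩
  have hσ := cycleType_of_pow_prime_eq_one (p := 2) (by rwa [sq])
  have hsum := sum_cycleType σ
  rw [hσ, Multiset.sum_replicate, smul_eq_mul] at hsum
  rw [hσ, ← hsum, Nat.mul_div_cancel _ two_pos]

variable {G : Type*} [AddCommGroup G]

def reflection (c : G) : Perm G := Equiv.subLeft c

@[simp]
theorem reflection_apply (c x : G) : reflection c x = c - x := rfl

theorem reflection_mul_reflection (a b : G) :
    reflection a * reflection b = Equiv.addRight (a - b) := by
  ext x
  simp only [Perm.mul_apply, reflection_apply, coe_addRight]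
  abel

theorem reflection_mul_self (c : G) : reflection c * reflection c = 1 := by
  rw [reflection_mul_reflection, sub_self, addRight_zero, Perm.one_def]

theorem reflection_add_add_eq_conj (c t : G) :
    reflection (c + (t + t)) = Equiv.addLeft t * reflection c * (Equiv.addLeft t)⁻¹ := by
  ext x
  simp only [Perm.mul_apply, reflection_apply, coe_addLeft, Perm.inv_def, addLeft_symm]
  abel

variable [DecidableEq G]

theorem swap_sub_sub_mul_reflection (c a b : G) :
    swap (c - a) (c - b) * reflection c = reflection c * swap a b := by
  rw [← reflection_apply c a, ← reflection_apply c b, swap_apply_apply, inv_mul_cancel_right]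

theorem reflection_mul_swap_mul_eq_one (u : G) :
    reflection (u + u) * swap 0 u * reflection 0 * (reflection (-u) * swap 0 (-u)) *
      reflection u = 1 := by
  have h₀ : swap 0 u * reflection 0 = reflection 0 * swap 0 (-u) := by
    simpa using swap_sub_sub_mul_reflection (0 : G) 0 (-u)
  have hu : swap 0 (-u) * reflection (-u) = reflection (-u) * swap 0 (-u) := by
    simpa [swap_comm] using swap_sub_sub_mul_reflection (-u) 0 (-u)
  calc _ = reflection (u + u) * reflection 0 * (swap 0 (-u) * reflection (-u) * swap 0 (-u)) *
        reflection u := by simp only [mul_assoc, h₀]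
    _ = reflection (u + u) * reflection 0 * (reflection (-u) * reflection u) := by
      rw [hu, mul_assoc (reflection (-u)), swap_mul_self, mul_one, mul_assoc]
    _ = 1 := by
      rw [reflection_mul_reflection, reflection_mul_reflection]
      ext x
      simp only [Perm.mul_apply, coe_addRight, Perm.one_apply]
      abel

variable [Fintype G]

theorem support_reflection (c : G) : (reflection c).support = ({x | x + x ≠ c} : Finset G) := by
  ext x
  simp [sub_eq_iff_eq_add, eq_comm (a := c)]

theorem cycleType_reflection (c : G) :
    (reflection c).cycleType = Multiset.replicate (#{x | x + x ≠ c} / 2) 2 := by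
  rw [cycleType_eq_replicate_of_mul_self (reflection_mul_self c), support_reflection]

theorem cycleType_reflection_add_add (c t : G) :
    (reflection (c + (t + t))).cycleType = (reflection c).cycleType := by
  rw [reflection_add_add_eq_conj, cycleType_conj]

theorem swap_mem_cycleFactorsFinset_reflection {a b c : G} (hab : a ≠ b) (h : a + b = c) :
    swap a b ∈ (reflection c).cycleFactorsFinset := by
  rw [mem_cycleFactorsFinset_iff, support_swap hab]
  refine ⟨isCycle_swap hab, fun x hx => ?_⟩
  rcases Finset.mem_insert.mp hx with rfl | hx
  · rw [swap_apply_left, reflection_apply, ← h, add_sub_cancel_left]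
  · rw [Finset.mem_singleton.mp hx, swap_apply_right, reflection_apply, ← h, add_sub_cancel_right]

theorem cycleType_reflection_mul_swap {a b c : G} (hab : a ≠ b) (h : a + b = c) :
    (reflection c * swap a b).cycleType = (reflection c).cycleType - {2} := by
  have hmem := swap_mem_cycleFactorsFinset_reflection hab h
  rw [← swap_inv, cycleType_mul_inv_mem_cycleFactorsFinset_eq_sub hmem,
    (isCycle_swap hab).cycleType, card_support_swap hab]

theorem cycleType_reflection_mul_swap_of_add_self {a b c d : G} (hab : a ≠ b) (had : a ≠ d)
    (hbd : b ≠ d) (h : a + b = c) (hd : d + d = c) :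
    (reflection c * swap a d).cycleType = 3 ::ₘ ((reflection c).cycleType - {2}) := by
  have hsplit : reflection c * swap a d = reflection c * swap a b * (swap a b * swap a d) := by
    rw [mul_assoc, swap_mul_self_mul]
  have hdisj : (reflection c * swap a b).Disjoint (swap a b * swap a d) := by
    intro x
    by_cases hx : x = a ∨ x = b ∨ x = d
    · left
      rcases hx with rfl | rfl | rfl
      · rw [Perm.mul_apply, swap_apply_left, reflection_apply, ← h, add_sub_cancel_right]
      · rw [Perm.mul_apply, swap_apply_right, reflection_apply, ← h, add_sub_cancel_left]
      · rw [Perm.mul_apply, swap_apply_of_ne_of_ne had.symm hbd.symm, reflection_apply, ← hd,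
          add_sub_cancel_right]
    · right
      simp only [not_or] at hx
      rw [Perm.mul_apply, swap_apply_of_ne_of_ne hx.1 hx.2.2, swap_apply_of_ne_of_ne hx.1 hx.2.1]
  rw [hsplit, hdisj.cycleType_mul, cycleType_reflection_mul_swap hab h,
    (isThreeCycle_swap_mul_swap_same hab had hbd).cycleType, add_comm, Multiset.singleton_add]

end Equiv.Perm

namespace Fin

open Fin.CommRing

variable {n : ℕ} [NeZero n]

theorem filter_add_self_ne_one (hn : Even n) : ({x | x + x ≠ 1} : Finset (Fin n)) = univ := by
  have := Nat.even_iff.mp hn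
  have := NeZero.pos n
  refine filter_true_of_mem fun x _ => ?_
  rw [Ne, Fin.ext_iff, val_add_eq_ite, val_one', Nat.mod_eq_of_lt (by omega)]
  split_ifs <;> omega

theorem filter_add_self_ne_zero (hn : Even n) :
    ({x | x + x ≠ 0} : Finset (Fin n)) =
      {0, ⟨n / 2, Nat.div_lt_self (NeZero.pos n) one_lt_two⟩}ᶜ := by
  have := Nat.even_iff.mp hn
  ext x
  simp only [mem_filter, mem_univ, true_and, mem_compl, mem_insert, mem_singleton, ne_eq,
    Fin.ext_iff, val_add_eq_ite, val_zero]
  split_ifs <;> omega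

theorem cycleType_reflection_one (hn : Even n) :
    (reflection (1 : Fin n)).cycleType = Multiset.replicate (n / 2) 2 := by
  rw [cycleType_reflection, filter_add_self_ne_one hn, card_univ, Fintype.card_fin]

theorem cycleType_reflection_zero (hn : Even n) :
    (reflection (0 : Fin n)).cycleType = Multiset.replicate ((n - 2) / 2) 2 := by
  have := Nat.even_iff.mp hn
  have := NeZero.pos n
  rw [cycleType_reflection, filter_add_self_ne_zero hn, card_compl, Fintype.card_fin,
    card_pair (by simp [Fin.ext_iff]; omega)]

theorem addRight_one_pow_val_sub_apply (a b : Fin n) :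
    (Equiv.addRight 1 ^ (b - a).val) a = b := by
  simp only [Equiv.addRight_pow, coe_addRight, nsmul_eq_mul, cast_val_eq_self, mul_one,
    add_sub_cancel]

end Fin

/-- Type I degeneration 4 for even `n ≥ 6`:
cycle types `((3)(2)^((n-4)/2), 2^((n-2)/2), 2^((n-2)/2), 2^(n/2))`,
product one, generating a transitive subgroup of `Sₙ`. -/
theorem stmt_14 (n : ℕ) (hn : Even n) (hn6 : 6 ≤ n) :
    ∃ σ₁ σ₂ σ₃ σ₄ : Equiv.Perm (Fin n),
      σ₁.cycleType = 3 ::ₘ Multiset.replicate ((n - 4) / 2) 2 ∧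
      σ₂.cycleType = Multiset.replicate ((n - 2) / 2) 2 ∧
      σ₃.cycleType = Multiset.replicate ((n - 2) / 2) 2 ∧
      σ₄.cycleType = Multiset.replicate (n / 2) 2 ∧
      σ₁ * σ₂ * σ₃ * σ₄ = 1 ∧
      ∀ a b : Fin n,
        ∃ g ∈ Subgroup.closure ({σ₁, σ₂, σ₃, σ₄} : Set (Equiv.Perm (Fin n))), g a = b := by
  have : NeZero n := ⟨by omega⟩
  open Fin.CommRing in
  have h2 : (2 : Fin n) = 1 + 1 := one_add_one_eq_two.symm
  have h01 : (0 : Fin n) ≠ 1 := by simp [Fin.ext_iff, Nat.mod_eq_of_lt (by omega : 1 < n)]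
  have h02 : (0 : Fin n) ≠ 2 := by simp [Fin.ext_iff, Nat.mod_eq_of_lt (by omega : 2 < n)]
  have h21 : (2 : Fin n) ≠ 1 := by
    simp [Fin.ext_iff, Nat.mod_eq_of_lt (by omega : 1 < n), Nat.mod_eq_of_lt (by omega : 2 < n)]
  have h0m : (0 : Fin n) ≠ -1 := (neg_ne_zero.mpr h01.symm).symm
  refine ⟨reflection 2 * swap 0 1, reflection 0, reflection (-1) * swap 0 (-1), reflection 1,
    ?_, Fin.cycleType_reflection_zero hn, ?_, Fin.cycleType_reflection_one hn, ?_, ?_⟩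
  · rw [cycleType_reflection_mul_swap_of_add_self h02 h01 h21 (zero_add 2) h2.symm, h2,
      ← zero_add (1 + 1), cycleType_reflection_add_add, Fin.cycleType_reflection_zero hn,
      Multiset.replicate_sub_singleton]
    congr 2
    omega
  · rw [cycleType_reflection_mul_swap h0m (zero_add _),
      show (-1 : Fin n) = 1 + (-1 + -1) by abel, cycleType_reflection_add_add,
      Fin.cycleType_reflection_one hn, Multiset.replicate_sub_singleton]
    congr 1
    omega
  · rw [h2]
    exact reflection_mul_swap_mul_eq_one 1
  · have hrot : reflection (1 : Fin n) * reflection 0 = Equiv.addRight 1 := by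
      rw [reflection_mul_reflection, sub_zero]
    intro a b
    refine ⟨_, pow_mem ?_ (b - a).val, Fin.addRight_one_pow_val_sub_apply a b⟩
    rw [← hrot]
    exact mul_mem (Subgroup.subset_closure (by simp)) (Subgroup.subset_closure (by simp))
end
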